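/- Assume in addition κ > 0, and let (λ_n, w_n), n ≥ N, be eigenpairs of problem (P) with ‖w_n‖_{L²} = 1 and λ_n = i·ρ_n², where | ρ_n − [ (n + 1/2)π + (β²η²/2 + γ − η² + 2iβη + 2i/κ)/(4(n + 1/2)π) ] | ≤ C/n² for some constant C > 0. Then (1/|λ_n|²)·( ∫₀¹ |w_n''(s)|² ds + (γ − η²)·∫₀¹ |w_n'(s)|² ds ) + ∫₀¹ |w_n(s)|² ds → 2 as n → ∞. -/

import Mathlib

open Set Complex

/-- An eigenpair of problem (P): `w` is a nonzero `C⁴` function on `[0,1]`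
satisfying the ODE `w'''' − (γ−η²)w'' + 2λβη w' + λ²w = 0` together with the
boundary conditions `w(0) = w''(0) = 0`, `w''(1) + λκ w'(1) = 0`,
`w'''(1) − (γ−η²) w'(1) = 0`. -/
def IsEigenpairP (β η γ κ : ℝ) (l : ℂ) (w : ℝ → ℂ) : Prop :=
  ContDiff ℝ 4 w ∧ (∃ s ∈ Icc (0:ℝ) 1, w s ≠ 0) ∧
  (∀ s ∈ Icc (0:ℝ) 1,
    iteratedDeriv 4 w s - ((γ - η^2 : ℝ) : ℂ) * iteratedDeriv 2 w s
      + 2 * l * ((β * η : ℝ) : ℂ) * deriv w s + l^2 * w s = 0) ∧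
  w 0 = 0 ∧ iteratedDeriv 2 w 0 = 0 ∧
  iteratedDeriv 2 w 1 + l * ((κ : ℝ) : ℂ) * deriv w 1 = 0 ∧
  iteratedDeriv 3 w 1 - ((γ - η^2 : ℝ) : ℂ) * deriv w 1 = 0

/-- An eigenvalue of problem (P). -/
def IsEigenvalueP (β η γ κ : ℝ) (l : ℂ) : Prop :=
  ∃ w : ℝ → ℂ, IsEigenpairP β η γ κ l w

open Filter Topology

/-!
Multiplying the equation by `w̄` and integrating by parts, the boundary conditions turn it into
the energy identity `E + λκ|w'(1)|² + 2λβη Z + λ² = 0` (for `‖w‖ = 1`), where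
`E = ‖w''‖² + (γ - η²)‖w'‖²` and `Z = ∫ w' w̄`. Divided by `λ`, its imaginary part reads
`E / |λ|² = 1 + 2βη Im Z / Im λ`, so it suffices that `Im Z = o(Im λ)`. The asymptotics of `ρₙ`
give `Im λₙ → ∞` and `|Re λₙ| ≤ Im λₙ`. As `|Z| ≤ ‖w'‖ ≤ (E / (γ - η²))^{1/2}` by Cauchy–Schwarz,
the imaginary part first shows that `E / |λ|²` is bounded; the real part then gives
`κ|w'(1)|² = O(Im λ)`, and `‖w'‖² = Re (w'(1) w̄(1)) - Re ∫ w'' w̄` yields `‖w'‖² = O(Im λ)`.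
Hence `|Im Z| ≤ ‖w'‖ = O((Im λ)^{1/2})`.
-/

open intervalIntegral ComplexConjugate

section CauchySchwarz

variable {a b : ℝ}

theorem sq_integral_mul_le_integral_sq_mul_integral_sq {f g : ℝ → ℝ} (hab : a ≤ b)
    (hf : Continuous f) (hg : Continuous g) :
    (∫ x in a..b, f x * g x) ^ 2 ≤ (∫ x in a..b, f x ^ 2) * ∫ x in a..b, g x ^ 2 := by
  have hquad : ∀ t : ℝ, 0 ≤ (∫ x in a..b, g x ^ 2) * (t * t)
      + (-2 * ∫ x in a..b, f x * g x) * t + ∫ x in a..b, f x ^ 2 := by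
    intro t
    have hexpand : ∫ x in a..b, (f x - t * g x) ^ 2 = (∫ x in a..b, g x ^ 2) * (t * t)
        + (-2 * ∫ x in a..b, f x * g x) * t + ∫ x in a..b, f x ^ 2 := by
      calc ∫ x in a..b, (f x - t * g x) ^ 2
          = ∫ x in a..b, (f x ^ 2 + (-2 * t) * (f x * g x) + t ^ 2 * g x ^ 2) := by
            congr 1 with x; ring
        _ = _ := by
            rw [integral_add, integral_add, integral_const_mul, integral_const_mul]
            · ring
            all_goals exact Continuous.intervalIntegrable (by fun_prop) a b
    exact hexpand ▸ integral_nonneg hab fun x _ => sq_nonneg _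
  have := discrim_le_zero hquad
  rw [discrim] at this
  linarith

theorem norm_integral_mul_conj_sq_le {f g : ℝ → ℂ} (hab : a ≤ b)
    (hf : Continuous f) (hg : Continuous g) :
    ‖∫ x in a..b, f x * conj (g x)‖ ^ 2 ≤ (∫ x in a..b, ‖f x‖ ^ 2) * ∫ x in a..b, ‖g x‖ ^ 2 := by
  have h : ‖∫ x in a..b, f x * conj (g x)‖ ≤ ∫ x in a..b, ‖f x‖ * ‖g x‖ := by
    simpa only [norm_mul, RCLike.norm_conj] using
      norm_integral_le_integral_norm (f := fun x => f x * conj (g x)) hab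
  calc ‖∫ x in a..b, f x * conj (g x)‖ ^ 2 ≤ (∫ x in a..b, ‖f x‖ * ‖g x‖) ^ 2 :=
        pow_le_pow_left₀ (norm_nonneg _) h 2
    _ ≤ _ := sq_integral_mul_le_integral_sq_mul_integral_sq hab hf.norm hg.norm

end CauchySchwarz

section IntegrationByParts

variable {a b : ℝ} {f f' g g' : ℝ → ℂ}

theorem integral_deriv_mul_conj (hf : ∀ x, HasDerivAt f (f' x) x)
    (hg : ∀ x, HasDerivAt g (g' x) x) (hf' : Continuous f') (hg' : Continuous g') :
    ∫ x in a..b, f' x * conj (g x)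
      = f b * conj (g b) - f a * conj (g a) - ∫ x in a..b, f x * conj (g' x) := by
  rw [integral_mul_deriv_eq_deriv_mul (v := fun x => conj (g x)) (v' := fun x => conj (g' x))
    (fun x _ => hf x) (fun x _ => (hg x).star) (hf'.intervalIntegrable _ _)
    ((continuous_conj.comp hg').intervalIntegrable _ _)]
  ring

theorem integral_mul_conj_self (f : ℝ → ℂ) :
    ∫ x in a..b, f x * conj (f x) = ((∫ x in a..b, ‖f x‖ ^ 2 : ℝ) : ℂ) := by
  simp only [mul_conj', ← integral_ofReal, ofReal_pow]

theorem two_mul_re_integral_deriv_mul_conj (hf : ∀ x, HasDerivAt f (f' x) x)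
    (hf' : Continuous f') :
    2 * (∫ x in a..b, f' x * conj (f x)).re = ‖f b‖ ^ 2 - ‖f a‖ ^ 2 := by
  have h := congrArg re (integral_deriv_mul_conj (a := a) (b := b) hf hf hf' hf')
  have hswap : ∫ x in a..b, f x * conj (f' x) = conj (∫ x in a..b, f' x * conj (f x)) := by
    rw [← intervalIntegral_conj]; simp only [map_mul, conj_conj, mul_comm]
  rw [hswap, sub_re, sub_re, conj_re, mul_conj', mul_conj'] at h
  norm_cast at h
  linarith

end IntegrationByParts

theorem ContDiff.hasDerivAt_iteratedDeriv {𝕜 F : Type*} [NontriviallyNormedField 𝕜]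
    [NormedAddCommGroup F] [NormedSpace 𝕜 F] {f : 𝕜 → F} {n k : ℕ} (hf : ContDiff 𝕜 n f)
    (hk : k < n) (x : 𝕜) :
    HasDerivAt (iteratedDeriv k f) (iteratedDeriv (k + 1) f x) x := by
  rw [iteratedDeriv_succ]
  exact (hf.differentiable_iteratedDeriv k (by exact_mod_cast hk) x).hasDerivAt

noncomputable def potentialEnergy (γ η : ℝ) (w : ℝ → ℂ) : ℝ :=
  (∫ s in (0:ℝ)..1, ‖iteratedDeriv 2 w s‖ ^ 2) + (γ - η ^ 2) * ∫ s in (0:ℝ)..1, ‖deriv w s‖ ^ 2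

namespace IsEigenpairP

variable {β η γ κ : ℝ} {l : ℂ} {w : ℝ → ℂ}

theorem hasDerivAt_iteratedDeriv (h : IsEigenpairP β η γ κ l w) {k : ℕ} (hk : k < 4) (s : ℝ) :
    HasDerivAt (iteratedDeriv k w) (iteratedDeriv (k + 1) w s) s :=
  h.1.hasDerivAt_iteratedDeriv hk s

theorem hasDerivAt (h : IsEigenpairP β η γ κ l w) (s : ℝ) : HasDerivAt w (deriv w s) s := by
  simpa using h.hasDerivAt_iteratedDeriv (k := 0) (by norm_num) s

theorem hasDerivAt_deriv (h : IsEigenpairP β η γ κ l w) (s : ℝ) :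
    HasDerivAt (deriv w) (iteratedDeriv 2 w s) s := by
  simpa using h.hasDerivAt_iteratedDeriv (k := 1) (by norm_num) s

theorem continuous_iteratedDeriv (h : IsEigenpairP β η γ κ l w) {k : ℕ} (hk : k ≤ 4) :
    Continuous (iteratedDeriv k w) :=
  h.1.continuous_iteratedDeriv k (by exact_mod_cast hk)

theorem continuous_deriv (h : IsEigenpairP β η γ κ l w) : Continuous (deriv w) := by
  simpa using h.continuous_iteratedDeriv (k := 1) (by norm_num)

theorem energy_identity (h : IsEigenpairP β η γ κ l w) :
    (potentialEnergy γ η w : ℂ) + l * κ * ((‖deriv w 1‖ ^ 2 : ℝ) : ℂ)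
      + 2 * l * ((β * η : ℝ) : ℂ) * (∫ s in (0:ℝ)..1, deriv w s * conj (w s))
      + l ^ 2 * ((∫ s in (0:ℝ)..1, ‖w s‖ ^ 2 : ℝ) : ℂ) = 0 := by
  have d2 : ∀ s, HasDerivAt (iteratedDeriv 2 w) (iteratedDeriv 3 w s) s :=
    h.hasDerivAt_iteratedDeriv (k := 2) (by norm_num)
  have d3 : ∀ s, HasDerivAt (iteratedDeriv 3 w) (iteratedDeriv 4 w s) s :=
    h.hasDerivAt_iteratedDeriv (k := 3) (by norm_num)
  have c0 := h.1.continuous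
  have c1 := h.continuous_deriv
  have c2 := h.continuous_iteratedDeriv (k := 2) (by norm_num)
  have c3 := h.continuous_iteratedDeriv (k := 3) (by norm_num)
  have c4 := h.continuous_iteratedDeriv (k := 4) (by norm_num)
  have i4 := integral_deriv_mul_conj (a := 0) (b := 1) d3 h.hasDerivAt c4 c1
  have i3 := integral_deriv_mul_conj (a := 0) (b := 1) d2 h.hasDerivAt_deriv c3 c2
  have i2 := integral_deriv_mul_conj (a := 0) (b := 1) h.hasDerivAt_deriv h.hasDerivAt c2 c1
  obtain ⟨-, -, hode, hw0, hw''0, hbc2, hbc3⟩ := h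
  set a : ℂ := ((γ - η ^ 2 : ℝ) : ℂ)
  have hweak : ∫ s in (0:ℝ)..1, (iteratedDeriv 4 w s * conj (w s)
      - a * (iteratedDeriv 2 w s * conj (w s))
      + 2 * l * ((β * η : ℝ) : ℂ) * (deriv w s * conj (w s)) + l ^ 2 * (w s * conj (w s))) = 0 := by
    rw [← integral_zero (a := (0:ℝ)) (b := 1) (μ := MeasureTheory.volume) (E := ℂ)]
    refine integral_congr fun s hs => ?_
    linear_combination conj (w s) * hode s (by rwa [uIcc_of_le zero_le_one] at hs)
  rw [integral_add, integral_add, integral_sub, integral_const_mul, integral_const_mul,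
    integral_const_mul] at hweak
  all_goals try exact Continuous.intervalIntegrable (by fun_prop) 0 1
  rw [integral_mul_conj_self] at i3 i2 hweak
  have hcw0 : conj (w 0) = 0 := by simp [hw0]
  have hb : ((‖deriv w 1‖ ^ 2 : ℝ) : ℂ) = deriv w 1 * conj (deriv w 1) := by
    rw [mul_conj', ofReal_pow]
  rw [potentialEnergy, ofReal_add, ofReal_mul, hb]
  linear_combination hweak - i4 + i3 + a * i2 - conj (w 1) * hbc3 + conj (deriv w 1) * hbc2
    + (iteratedDeriv 3 w 0 - a * deriv w 0) * hcw0 - conj (deriv w 0) * hw''0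

theorem energy_identity_div (h : IsEigenpairP β η γ κ l w)
    (hnorm : ∫ s in (0:ℝ)..1, ‖w s‖ ^ 2 = 1) (hl : l ≠ 0) :
    κ * ((‖deriv w 1‖ ^ 2 : ℝ) : ℂ)
      + 2 * ((β * η : ℝ) : ℂ) * (∫ s in (0:ℝ)..1, deriv w s * conj (w s)) + l
      = -(potentialEnergy γ η w : ℂ) / l := by
  have hid := h.energy_identity
  rw [hnorm, ofReal_one, mul_one] at hid
  rw [eq_div_iff hl]
  linear_combination hid

theorem two_mul_re_integral_deriv_mul_conj (h : IsEigenpairP β η γ κ l w) :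
    2 * (∫ s in (0:ℝ)..1, deriv w s * conj (w s)).re = ‖w 1‖ ^ 2 := by
  rw [_root_.two_mul_re_integral_deriv_mul_conj h.hasDerivAt h.continuous_deriv, h.2.2.2.1,
    norm_zero]
  ring

theorem integral_norm_deriv_sq_le (h : IsEigenpairP β η γ κ l w) :
    ∫ s in (0:ℝ)..1, ‖deriv w s‖ ^ 2
      ≤ ‖deriv w 1‖ * ‖w 1‖ + ‖∫ s in (0:ℝ)..1, iteratedDeriv 2 w s * conj (w s)‖ := by
  have hibp := congrArg re (integral_deriv_mul_conj (a := 0) (b := 1) h.hasDerivAt_deriv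
    h.hasDerivAt (h.continuous_iteratedDeriv (k := 2) (by norm_num)) h.continuous_deriv)
  rw [integral_mul_conj_self, h.2.2.2.1, map_zero, mul_zero, sub_zero, sub_re, ofReal_re] at hibp
  have h1 := re_le_norm (deriv w 1 * conj (w 1))
  have h2 := neg_le_of_abs_le (abs_re_le_norm (∫ s in (0:ℝ)..1, iteratedDeriv 2 w s * conj (w s)))
  rw [norm_mul, RCLike.norm_conj] at h1
  linarith

end IsEigenpairP

/-- Applied with `x + iy = λ`, `r = E / |λ|²`, `e2 = ‖w''‖²`, `i1 = ‖w'‖²`, `b = |w'(1)|²`,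
`zr + i zi = ∫ w' w̄` and `v = |∫ w'' w̄|`; `hre`, `him` are the two parts of the energy identity
divided by `λ`. -/
theorem sq_sub_one_le_of_energy_balance {a m κ x y r e2 i1 b zr zi v : ℝ}
    (ha : 0 < a) (hm : 0 ≤ m) (hκ : 0 < κ) (hy : 1 ≤ y) (hx : |x| ≤ y)
    (hzr : 0 ≤ zr)
    (hE : e2 + a * i1 = r * (x ^ 2 + y ^ 2)) (hZ : zr ^ 2 + zi ^ 2 ≤ i1)
    (hi1 : i1 ≤ (b + 2 * zr) / 2 + v) (hv2 : v ^ 2 ≤ e2)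
    (hre : r * x + κ * b + 2 * m * zr + x = 0) (him : r * y = 2 * m * zi + y) :
    (r - 1) ^ 2 ≤ 4 * m ^ 2 * ((3 + 8 * m ^ 2 / a) / κ + 6 + 16 * m ^ 2 / a) / y := by
  set c := 8 * m ^ 2 / a with hc
  have hy0 : 0 < y := by linarith
  have hx2 : x ^ 2 ≤ y ^ 2 := sq_le_sq' (abs_le.1 hx).1 (abs_le.1 hx).2
  have hi1_nonneg : 0 ≤ i1 := by nlinarith
  have he2 : 0 ≤ e2 := (sq_nonneg v).trans hv2
  have hr0 : 0 ≤ r := by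
    by_contra! hr
    nlinarith [mul_pos_of_neg_of_neg hr (show -(x ^ 2 + y ^ 2) < 0 by nlinarith)]
  have hsq : (r - 1) ^ 2 * y ^ 2 = 4 * m ^ 2 * zi ^ 2 := by
    linear_combination (r * y - y + 2 * m * zi) * him
  have hratio : (r - 1) ^ 2 ≤ c * r := by
    have hai1 : a * i1 ≤ 2 * r * y ^ 2 := by nlinarith
    have : (r - 1) ^ 2 * y ^ 2 ≤ c * r * y ^ 2 := by
      rw [hsq, hc]
      calc 4 * m ^ 2 * zi ^ 2 ≤ 4 * m ^ 2 * (2 * r * y ^ 2 / a) := by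
            gcongr; rw [le_div_iff₀ ha]; nlinarith
        _ = 8 * m ^ 2 / a * r * y ^ 2 := by ring
    exact le_of_mul_le_mul_right this (by positivity)
  have hr : r ≤ 2 + c := by nlinarith
  have hb' : κ * b ≤ (3 + c) * y := by
    nlinarith [abs_le.1 hx, mul_nonneg hm hzr]
  have hv' : v ≤ (r + 1 / 2) * y := by
    have : v * (2 * y) ≤ (r + 1 / 2) * y * (2 * y) := by
      nlinarith [sq_nonneg (v - y), mul_nonneg hr0 (sub_nonneg.2 hx2), mul_nonneg ha.le hi1_nonneg]
    exact le_of_mul_le_mul_right this (by positivity)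
  have hi1' : i1 ≤ ((3 + c) / κ + 6 + 2 * c) * y := by
    have hbκ : b ≤ (3 + c) / κ * y := by
      rw [div_mul_eq_mul_div, le_div_iff₀ hκ]; linarith
    have hzr' : 2 * zr ≤ 1 + i1 := by nlinarith [sq_nonneg (zr - 1), sq_nonneg zi]
    have hry : r * y ≤ (2 + c) * y := mul_le_mul_of_nonneg_right hr hy0.le
    linarith
  rw [le_div_iff₀ hy0, show 16 * m ^ 2 / a = 2 * c by rw [hc]; ring]
  nlinarith [mul_le_mul_of_nonneg_left hi1' (by positivity : 0 ≤ 4 * m ^ 2)]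

theorem exists_sq_potentialEnergy_div_sub_one_le {β η γ κ : ℝ} (hγ : η ^ 2 < γ)
    (hm : 0 ≤ β * η) (hκ : 0 < κ) :
    ∃ K : ℝ, ∀ (l : ℂ) (w : ℝ → ℂ), IsEigenpairP β η γ κ l w →
      ∫ s in (0:ℝ)..1, ‖w s‖ ^ 2 = 1 → 1 ≤ l.im → |l.re| ≤ l.im →
      (potentialEnergy γ η w / ‖l‖ ^ 2 - 1) ^ 2 ≤ K / l.im := by
  refine ⟨4 * (β * η) ^ 2 * ((3 + 8 * (β * η) ^ 2 / (γ - η ^ 2)) / κ + 6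
    + 16 * (β * η) ^ 2 / (γ - η ^ 2)), fun l w h hnorm hy hx => ?_⟩
  have hl : l ≠ 0 := fun h0 => by rw [h0, zero_im] at hy; linarith
  have hq : ‖l‖ ^ 2 = l.re ^ 2 + l.im ^ 2 := by rw [Complex.sq_norm, normSq_apply]; ring
  have hq0 : 0 < ‖l‖ ^ 2 := by positivity
  have hdiv := h.energy_identity_div hnorm hl
  have hre := congrArg re hdiv
  have him := congrArg im hdiv
  simp only [add_re, add_im, mul_re, mul_im, ofReal_re, ofReal_im, re_ofNat, im_ofNat, div_re,
    div_im, neg_re, neg_im, normSq_eq_norm_sq, mul_zero, zero_mul, sub_zero, add_zero, zero_add,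
    neg_zero, zero_div] at hre him
  have hZ := norm_integral_mul_conj_sq_le zero_le_one h.continuous_deriv h.1.continuous
  have hS := norm_integral_mul_conj_sq_le zero_le_one
    (h.continuous_iteratedDeriv (k := 2) (by norm_num)) h.1.continuous
  rw [hnorm, mul_one] at hZ hS
  rw [Complex.sq_norm, normSq_apply] at hZ
  have hi1 := h.integral_norm_deriv_sq_le
  have hZre := h.two_mul_re_integral_deriv_mul_conj
  set Z := ∫ s in (0:ℝ)..1, deriv w s * conj (w s)
  set S := ∫ s in (0:ℝ)..1, iteratedDeriv 2 w s * conj (w s)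
  set E := potentialEnergy γ η w
  refine sq_sub_one_le_of_energy_balance (sub_pos.2 hγ) hm hκ hy hx (r := E / ‖l‖ ^ 2)
    (e2 := ∫ s in (0:ℝ)..1, ‖iteratedDeriv 2 w s‖ ^ 2) (i1 := ∫ s in (0:ℝ)..1, ‖deriv w s‖ ^ 2)
    (b := ‖deriv w 1‖ ^ 2) (zr := Z.re) (zi := Z.im) (v := ‖S‖)
    (by linarith [sq_nonneg ‖w 1‖]) ?_ (by nlinarith) ?_ hS ?_ ?_
  · rw [← hq, div_mul_cancel₀ _ hq0.ne']; rfl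
  · nlinarith [two_mul_le_add_sq ‖deriv w 1‖ ‖w 1‖]
  · linear_combination hre
  · linear_combination -him

theorem re_le_im_I_mul_sq_and_abs_re_le {ρ : ℂ} (hre : 2 ≤ ρ.re) (him : |ρ.im| ≤ 1 / 2) :
    ρ.re ≤ (I * ρ ^ 2).im ∧ |(I * ρ ^ 2).re| ≤ (I * ρ ^ 2).im := by
  have hre' : (I * ρ ^ 2).re = -(2 * ρ.re * ρ.im) := by simp [sq]; ring
  have him' : (I * ρ ^ 2).im = ρ.re ^ 2 - ρ.im ^ 2 := by simp [sq]
  have him2 : ρ.im ^ 2 ≤ 1 / 4 := by nlinarith [sq_abs ρ.im, abs_nonneg ρ.im]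
  rw [hre', him', abs_neg, abs_mul, abs_mul, abs_two, abs_of_pos (by linarith : 0 < ρ.re)]
  constructor <;> nlinarith [abs_nonneg ρ.im]

theorem tendsto_im_I_mul_sq_atTop {α : Type*} {l : Filter α} {ρ : α → ℂ} {t : α → ℝ}
    (ht : Tendsto t l atTop) (hρ : Tendsto (fun n => ρ n - t n) l (𝓝 0)) :
    Tendsto (fun n => (I * ρ n ^ 2).im) l atTop ∧
      ∀ᶠ n in l, |(I * ρ n ^ 2).re| ≤ (I * ρ n ^ 2).im := by
  have hre : Tendsto (fun n => (ρ n).re) l atTop := by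
    simpa using ht.atTop_add ((continuous_re.tendsto 0).comp hρ)
  have him : Tendsto (fun n => |(ρ n).im|) l (𝓝 0) := by
    simpa [Function.comp_def] using ((continuous_abs.comp continuous_im).tendsto 0).comp hρ
  have hev := (hre.eventually_ge_atTop 2).and
    (him.eventually_le_const (by norm_num : (0:ℝ) < 1 / 2))
  exact ⟨tendsto_atTop_mono' l
      (hev.mono fun n h => (re_le_im_I_mul_sq_and_abs_re_le h.1 h.2).1) hre,
    hev.mono fun n h => (re_le_im_I_mul_sq_and_abs_re_le h.1 h.2).2⟩

theorem tendsto_natCast_add_half_mul_pi_atTop :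
    Tendsto (fun n : ℕ => ((n : ℝ) + 1/2) * Real.pi) atTop atTop :=
  (tendsto_natCast_atTop_atTop.atTop_add tendsto_const_nhds).atTop_mul_const Real.pi_pos

theorem tendsto_sub_of_norm_sub_le {ρ : ℕ → ℂ} {c : ℂ} {C : ℝ} {N : ℕ}
    (hρ : ∀ n : ℕ, N ≤ n →
      ‖ρ n - ((((n : ℝ) + 1/2) * Real.pi : ℝ) + c / ((4 * ((n : ℝ) + 1/2) * Real.pi : ℝ) : ℂ))‖
        ≤ C / (n : ℝ)^2) :
    Tendsto (fun n : ℕ => ρ n - ((((n : ℝ) + 1/2) * Real.pi : ℝ) : ℂ)) atTop (𝓝 0) := by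
  have ht : Tendsto (fun n : ℕ => 4 * ((n : ℝ) + 1/2) * Real.pi) atTop atTop :=
    (tendsto_natCast_add_half_mul_pi_atTop.const_mul_atTop (by norm_num : (0:ℝ) < 4)).congr
      fun n => by ring
  have hδ := squeeze_zero_norm' (eventually_atTop.2 ⟨N, hρ⟩)
    (tendsto_const_nhds.div_atTop
      ((tendsto_pow_atTop two_ne_zero).comp tendsto_natCast_atTop_atTop))
  have hc : Tendsto (fun n : ℕ => c / ((4 * ((n : ℝ) + 1/2) * Real.pi : ℝ) : ℂ)) atTop (𝓝 0) := by
    simpa [div_eq_mul_inv] using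
      ((continuous_ofReal.tendsto 0).comp (tendsto_inv_atTop_zero.comp ht)).const_mul c
  simpa only [sub_add_cancel, zero_add, sub_add_eq_sub_sub] using hδ.add hc

theorem eigenvector_energy_norm_limit_general (β η γ κ : ℝ) (hβ : β ∈ Ioo (0:ℝ) 1)
    (hη : 0 ≤ η) (hκ : 0 < κ) (hγ : η^2 < γ)
    (N : ℕ) (C : ℝ) (lam : ℕ → ℂ) (ρ : ℕ → ℂ) (w : ℕ → ℝ → ℂ)
    (heig : ∀ n : ℕ, N ≤ n → IsEigenpairP β η γ κ (lam n) (w n))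
    (hnorm : ∀ n : ℕ, N ≤ n → (∫ s in (0:ℝ)..1, ‖w n s‖^2) = 1)
    (hlam : ∀ n : ℕ, N ≤ n → lam n = Complex.I * (ρ n)^2)
    (hρ : ∀ n : ℕ, N ≤ n →
      ‖ρ n -
          ((((n : ℝ) + 1/2) * Real.pi : ℝ)
            + (((β^2 * η^2 / 2 + γ - η^2 : ℝ) : ℂ)
                + 2 * Complex.I * ((β * η : ℝ) : ℂ)
                + 2 * Complex.I / ((κ : ℝ) : ℂ))
              / ((4 * ((n : ℝ) + 1/2) * Real.pi : ℝ) : ℂ))‖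
        ≤ C / (n : ℝ)^2) :
    Tendsto (fun n : ℕ =>
        (1 / ‖lam n‖^2)
            * ((∫ s in (0:ℝ)..1, ‖iteratedDeriv 2 (w n) s‖^2)
                + (γ - η^2) * ∫ s in (0:ℝ)..1, ‖deriv (w n) s‖^2)
          + ∫ s in (0:ℝ)..1, ‖w n s‖^2)
      atTop (𝓝 2) := by
  obtain ⟨K, hK⟩ := exists_sq_potentialEnergy_div_sub_one_le hγ (mul_nonneg hβ.1.le hη) hκ
  have hlam' : ∀ᶠ n in atTop, lam n = I * ρ n ^ 2 := eventually_atTop.2 ⟨N, hlam⟩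
  obtain ⟨hy, hxy⟩ :=
    tendsto_im_I_mul_sq_atTop tendsto_natCast_add_half_mul_pi_atTop (tendsto_sub_of_norm_sub_le hρ)
  replace hy : Tendsto (fun n => (lam n).im) atTop atTop :=
    hy.congr' (hlam'.mono fun n h => (congrArg im h).symm)
  have hbound : ∀ᶠ n in atTop, ‖(1 / ‖lam n‖^2)
      * ((∫ s in (0:ℝ)..1, ‖iteratedDeriv 2 (w n) s‖^2)
        + (γ - η^2) * ∫ s in (0:ℝ)..1, ‖deriv (w n) s‖^2)
      + (∫ s in (0:ℝ)..1, ‖w n s‖^2) - 2‖ ≤ √(K / (lam n).im) := by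
    filter_upwards [eventually_ge_atTop N, hy.eventually_ge_atTop 1, hxy, hlam']
      with n hn hy1 hxy hl
    rw [hnorm n hn, Real.norm_eq_abs, one_div_mul_eq_div, ← potentialEnergy,
      show ∀ r : ℝ, r + 1 - 2 = r - 1 by intro r; ring]
    exact Real.abs_le_sqrt (hK _ _ (heig n hn) (hnorm n hn) hy1 (hl ▸ hxy))
  have hlim : Tendsto (fun n => √(K / (lam n).im)) atTop (𝓝 0) := by
    simpa using (hy.const_div_atTop K).sqrt
  exact tendsto_sub_nhds_zero_iff.1 (squeeze_zero_norm' hbound hlim)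

/-- the squared energy norms of the eigenvectors
`x_n = (w_n/λ_n, w_n)` of the closed-loop system operator tend to `2`. -/
theorem eigenvector_energy_norm_limit (β η γ κ : ℝ) (hβ : β ∈ Ioo (0:ℝ) 1)
    (hη : 0 ≤ η) (hκ : 0 < κ) (hγ : η^2 < γ)
    (N : ℕ) (C : ℝ) (hC : 0 < C) (lam : ℕ → ℂ) (ρ : ℕ → ℂ) (w : ℕ → ℝ → ℂ)
    (heig : ∀ n : ℕ, N ≤ n → IsEigenpairP β η γ κ (lam n) (w n))
    (hnorm : ∀ n : ℕ, N ≤ n → (∫ s in (0:ℝ)..1, ‖w n s‖^2) = 1)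
    (hlam : ∀ n : ℕ, N ≤ n → lam n = Complex.I * (ρ n)^2)
    (hρ : ∀ n : ℕ, N ≤ n →
      ‖ρ n -
          ((((n : ℝ) + 1/2) * Real.pi : ℝ)
            + (((β^2 * η^2 / 2 + γ - η^2 : ℝ) : ℂ)
                + 2 * Complex.I * ((β * η : ℝ) : ℂ)
                + 2 * Complex.I / ((κ : ℝ) : ℂ))
              / ((4 * ((n : ℝ) + 1/2) * Real.pi : ℝ) : ℂ))‖
        ≤ C / (n : ℝ)^2) :
    Tendsto (fun n : ℕ =>
        (1 / ‖lam n‖^2)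
            * ((∫ s in (0:ℝ)..1, ‖iteratedDeriv 2 (w n) s‖^2)
                + (γ - η^2) * ∫ s in (0:ℝ)..1, ‖deriv (w n) s‖^2)
          + ∫ s in (0:ℝ)..1, ‖w n s‖^2)
      atTop (𝓝 2) :=
  eigenvector_energy_norm_limit_general β η γ κ hβ hη hκ hγ N C lam ρ w heig hnorm hlam hρ
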